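/- arXiv:1412.5849 — 2 statements merged into one kernel-verified Lean document; each statement's English description precedes it below -/
import Mathlib

section
/- For every integer n ≥ 3, the rainbow connection number of the power graph of the dihedral group D_{2n} of order 2n equals n. -/
/-- The power graph of a group `G`: distinct elements `x` and `y` are adjacent
iff one is a power of the other. -/
def powerGraph (G : Type*) [Group G] : SimpleGraph G where
  Adj x y := x ≠ y ∧ (x ∈ Subgroup.zpowers y ∨ y ∈ Subgroup.zpowers x)
  symm := ⟨fun x y h => ⟨h.1.symm, h.2.symm⟩⟩
  loopless := ⟨fun x h => h.1 rfl⟩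

/-- `ζ` is a rainbow `k`-coloring of `Γ`: every pair of vertices is joined by a
path whose edges receive pairwise distinct colors. -/
def IsRainbowColoring {V : Type*} (Γ : SimpleGraph V) {k : ℕ} (ζ : Sym2 V → Fin k) : Prop :=
  ∀ u v : V, ∃ p : Γ.Walk u v, p.IsPath ∧ (p.edges.map ζ).Nodup

/-- The rainbow connection number of `Γ`: the least `k` admitting a rainbow
`k`-coloring. -/
noncomputable def rainbowConnection {V : Type*} (Γ : SimpleGraph V) : ℕ :=
  sInf {k : ℕ | ∃ ζ : Sym2 V → Fin k, IsRainbowColoring Γ ζ}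

/-- An element `x` is a maximal involution if it has order 2 and the only
cyclic subgroup containing `x` is `⟨x⟩`. -/
def IsMaximalInvolution {G : Type*} [Group G] (x : G) : Prop :=
  orderOf x = 2 ∧ ∀ g : G, x ∈ Subgroup.zpowers g → Subgroup.zpowers g = Subgroup.zpowers x

/-!
The reflections `sr i` are maximal involutions, hence pendant vertices of the power graph, all
attached to the identity. A rainbow path between two of them passes through both of their pendant
edges, so these `n` edges need `n` distinct colours. Conversely `n` colours suffice: colour
`{1, sr i}` by `i`, join rotations through the generator `r 1` (adjacent to every rotation) with
`{r a, r 1}` coloured `a`, and colour the remaining edges at `1` by `1`. Only the pairs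
`(sr 0, r 1)` and `(sr 1, r b)` need a detour of length three, and it is rainbow because
`0, 1, 2` are distinct in `ZMod n` for `n ≥ 3`.
-/

open SimpleGraph Subgroup DihedralGroup Function

section Rainbow

variable {V α : Type*} {Γ : SimpleGraph V}

lemma rainbowConnection_eq_of {m : ℕ} (hζ : ∃ ζ : Sym2 V → Fin m, IsRainbowColoring Γ ζ)
    (hle : ∀ (k : ℕ) (ζ : Sym2 V → Fin k), IsRainbowColoring Γ ζ → m ≤ k) :
    rainbowConnection Γ = m :=
  le_antisymm (Nat.sInf_le hζ) (le_csInf ⟨m, hζ⟩ fun k ⟨ζ, hζ⟩ => hle k ζ hζ)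

def RainbowConnected (Γ : SimpleGraph V) (c : Sym2 V → α) (u v : V) : Prop :=
  ∃ p : Γ.Walk u v, (p.edges.map c).Nodup

namespace RainbowConnected

variable {c : Sym2 V → α} {u v w x : V}

lemma refl (c : Sym2 V → α) (u : V) : RainbowConnected Γ c u u := ⟨.nil, by simp⟩

lemma symm (h : RainbowConnected Γ c u v) : RainbowConnected Γ c v u := by
  obtain ⟨p, hp⟩ := h
  exact ⟨p.reverse, by simpa [Walk.edges_reverse, List.map_reverse] using hp⟩

lemma of_adj (h : Γ.Adj u v) : RainbowConnected Γ c u v := ⟨.cons h .nil, by simp⟩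

lemma of_adj_adj (huv : Γ.Adj u v) (hvw : Γ.Adj v w) (hc : c s(u, v) ≠ c s(v, w)) :
    RainbowConnected Γ c u w :=
  ⟨.cons huv (.cons hvw .nil), by simpa using hc⟩

lemma of_adj_adj_adj (huv : Γ.Adj u v) (hvw : Γ.Adj v w) (hwx : Γ.Adj w x)
    (hc : [c s(u, v), c s(v, w), c s(w, x)].Nodup) : RainbowConnected Γ c u x :=
  ⟨.cons huv (.cons hvw (.cons hwx .nil)), hc⟩

end RainbowConnected

lemma exists_isRainbowColoring_of_rainbowConnected [Fintype α] (c : Sym2 V → α)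
    (hc : ∀ u v, RainbowConnected Γ c u v) :
    ∃ ζ : Sym2 V → Fin (Fintype.card α), IsRainbowColoring Γ ζ := by
  classical
  refine ⟨Fintype.equivFin α ∘ c, fun u v => ?_⟩
  obtain ⟨p, hp⟩ := hc u v
  refine ⟨p.bypass, p.bypass_isPath, ?_⟩
  rw [← List.map_map]
  exact ((p.edges_bypass_sublist_edges.map c).nodup hp).map (Fintype.equivFin α).injective

lemma SimpleGraph.Walk.mk_mem_edges_of_forall_adj_eq {u v c : V} (hu : ∀ y, Γ.Adj u y → y = c)
    (huv : u ≠ v) (p : Γ.Walk u v) : s(u, c) ∈ p.edges := by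
  cases p with
  | nil => exact absurd rfl huv
  | cons h _ => obtain rfl := hu _ h; simp

/-- A rainbow path between two pendant vertices at `c` uses both of their edges to `c`. -/
lemma IsRainbowColoring.card_le_of_forall_adj_eq {k : ℕ} {ζ : Sym2 V → Fin k}
    (hζ : IsRainbowColoring Γ ζ) {ι : Type*} [Fintype ι] {f : ι → V} (hf : Injective f)
    {c : V} (hc : ∀ i y, Γ.Adj (f i) y → y = c) : Fintype.card ι ≤ k := by
  suffices Injective fun i => ζ s(f i, c) by
    simpa using Fintype.card_le_of_injective _ this
  intro i j hij
  by_contra hne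
  have hfne : f i ≠ f j := hf.ne hne
  obtain ⟨p, -, hp⟩ := hζ (f i) (f j)
  have hi := p.mk_mem_edges_of_forall_adj_eq (hc i) hfne
  have hj : s(f j, c) ∈ p.edges := by
    simpa using p.reverse.mk_mem_edges_of_forall_adj_eq (hc j) hfne.symm
  exact hfne (Sym2.congr_left.mp (List.inj_on_of_nodup_map hp hi hj hij))

end Rainbow

section PowerGraph

variable {G : Type*} [Group G]

lemma powerGraph_adj_of_mem_zpowers {x g : G} (h : x ∈ zpowers g) (hne : x ≠ g) :
    (powerGraph G).Adj x g :=
  ⟨hne, .inl h⟩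

lemma powerGraph_one_adj {x : G} (hx : x ≠ 1) : (powerGraph G).Adj 1 x :=
  ⟨hx.symm, .inl (one_mem _)⟩

lemma eq_one_or_eq_of_mem_zpowers_of_orderOf_eq_two {x y : G} (hx : orderOf x = 2)
    (hy : y ∈ zpowers x) : y = 1 ∨ y = x := by
  obtain ⟨k, rfl⟩ := mem_zpowers_iff.mp hy
  rw [← zpow_mod_orderOf, hx]
  rcases Int.emod_two_eq_zero_or_one k with h | h <;> simp [h]

lemma IsMaximalInvolution.eq_one_of_powerGraph_adj {x y : G} (hx : IsMaximalInvolution x)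
    (h : (powerGraph G).Adj x y) : y = 1 := by
  have hy : y ∈ zpowers x := by
    rcases h.2 with h' | h'
    · exact hx.2 y h' ▸ mem_zpowers y
    · exact h'
  exact (eq_one_or_eq_of_mem_zpowers_of_orderOf_eq_two hx.1 hy).resolve_right h.ne.symm

end PowerGraph

lemma ZMod.zero_one_two_nodup {n : ℕ} (hn : 3 ≤ n) : [(0 : ZMod n), 1, 2].Nodup := by
  have hval : [(0 : ZMod n), 1, 2].map ZMod.val = [0, 1, 2] := by
    simp [ZMod.val_one_eq_one_mod, ZMod.val_two_eq_two_mod, Nat.mod_eq_of_lt (by omega : 1 < n),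
      Nat.mod_eq_of_lt (by omega : 2 < n)]
  exact List.Nodup.of_map ZMod.val (hval ▸ by decide)

namespace DihedralGroup

variable {n : ℕ}

lemma sr_notMem_zpowers_r (i a : ZMod n) : sr i ∉ zpowers (r a) := by
  rintro ⟨k, hk⟩
  simp [r_zpow] at hk

lemma sr_ne_one (i : ZMod n) : sr i ≠ 1 := by
  simp [one_def, -r_zero]

lemma isMaximalInvolution_sr (i : ZMod n) : IsMaximalInvolution (sr i) := by
  refine ⟨orderOf_sr i, fun g hg => ?_⟩
  cases g with
  | r a => exact absurd hg (sr_notMem_zpowers_r i a)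
  | sr j =>
    rcases eq_one_or_eq_of_mem_zpowers_of_orderOf_eq_two (orderOf_sr j) hg with h | h
    · exact absurd h (sr_ne_one i)
    · rw [h]

lemma r_mem_zpowers_r_one (a : ZMod n) : r a ∈ zpowers (r 1) :=
  ⟨ZMod.cast a, by simp⟩

/-- The edge `{1, sr i}` is coloured `i`, an edge `{r a, r 1}` is coloured `a`, and every other
edge at `1` is coloured `1`; edges of the remaining shapes get arbitrary colours. -/
def powerGraphColor : DihedralGroup n → DihedralGroup n → ZMod n
  | r a, r b => if a = 1 then b else if b = 1 then a else 1
  | r _, sr i => i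
  | sr i, r _ => i
  | sr _, sr _ => 0

lemma powerGraphColor_comm (x y : DihedralGroup n) :
    powerGraphColor x y = powerGraphColor y x := by
  cases x <;> cases y <;> simp only [powerGraphColor]
  split_ifs <;> simp_all

variable (n) in
def powerGraphColoring : Sym2 (DihedralGroup n) → ZMod n :=
  Sym2.lift ⟨powerGraphColor, powerGraphColor_comm⟩

lemma powerGraphColoring_sr_one (i : ZMod n) : powerGraphColoring n s(sr i, 1) = i := rfl

lemma powerGraphColoring_r_r_one (a : ZMod n) : powerGraphColoring n s(r a, r 1) = a := by
  change ite _ _ _ = a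
  split_ifs <;> simp_all

lemma powerGraphColoring_one_r {a : ZMod n} (ha : a ≠ 1) :
    powerGraphColoring n s(1, r a) = 1 := by
  change ite _ _ _ = 1
  split_ifs with h
  · exact eq_of_zero_eq_one h a 1
  · rfl

lemma powerGraph_adj_sr_one (i : ZMod n) : (powerGraph (DihedralGroup n)).Adj (sr i) 1 :=
  (powerGraph_one_adj (sr_ne_one i)).symm

lemma powerGraph_adj_r_r_one {a : ZMod n} (ha : a ≠ 1) :
    (powerGraph (DihedralGroup n)).Adj (r a) (r 1) :=
  powerGraph_adj_of_mem_zpowers (r_mem_zpowers_r_one a) (by simpa using ha)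

lemma powerGraph_one_adj_r {a : ZMod n} (ha : a ≠ 0) :
    (powerGraph (DihedralGroup n)).Adj 1 (r a) :=
  powerGraph_one_adj fun h => ha (r.inj (h.trans one_def))

lemma rainbowConnected_r_r (a b : ZMod n) :
    RainbowConnected (powerGraph (DihedralGroup n)) (powerGraphColoring n) (r a) (r b) := by
  rcases eq_or_ne a b with rfl | hab
  · exact .refl _ _
  rcases eq_or_ne a 1 with rfl | ha
  · exact .of_adj (powerGraph_adj_r_r_one hab.symm).symm
  rcases eq_or_ne b 1 with rfl | hb
  · exact .of_adj (powerGraph_adj_r_r_one ha)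
  refine .of_adj_adj (powerGraph_adj_r_r_one ha) (powerGraph_adj_r_r_one hb).symm ?_
  rwa [Sym2.eq_swap (a := r 1), powerGraphColoring_r_r_one, powerGraphColoring_r_r_one]

lemma rainbowConnected_sr_sr (i j : ZMod n) :
    RainbowConnected (powerGraph (DihedralGroup n)) (powerGraphColoring n) (sr i) (sr j) := by
  rcases eq_or_ne i j with rfl | hij
  · exact .refl _ _
  refine .of_adj_adj (powerGraph_adj_sr_one i) (powerGraph_adj_sr_one j).symm ?_
  rwa [Sym2.eq_swap (a := 1), powerGraphColoring_sr_one, powerGraphColoring_sr_one]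

lemma rainbowConnected_sr_r (hn : 3 ≤ n) (i b : ZMod n) :
    RainbowConnected (powerGraph (DihedralGroup n)) (powerGraphColoring n) (sr i) (r b) := by
  have h012 := ZMod.zero_one_two_nodup hn
  obtain ⟨⟨h01, h02⟩, h12⟩ :
      ((0 : ZMod n) ≠ 1 ∧ (0 : ZMod n) ≠ 2) ∧ (1 : ZMod n) ≠ 2 := by
    simpa using h012
  rcases eq_or_ne b 0 with rfl | hb0
  · simpa using RainbowConnected.of_adj (powerGraph_adj_sr_one i)
  rcases eq_or_ne b 1 with rfl | hb1
  · rcases eq_or_ne i 0 with rfl | hi0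
    · -- the direct route `sr 0, 1, r 1` repeats the colour `0`
      refine .of_adj_adj_adj (powerGraph_adj_sr_one 0) (powerGraph_one_adj_r h02.symm)
        (powerGraph_adj_r_r_one h12.symm) ?_
      rwa [powerGraphColoring_sr_one, powerGraphColoring_one_r h12.symm,
        powerGraphColoring_r_r_one]
    · refine .of_adj_adj (powerGraph_adj_sr_one i) (powerGraph_one_adj_r hb0) ?_
      rwa [powerGraphColoring_sr_one, one_def, powerGraphColoring_r_r_one]
  · rcases eq_or_ne i 1 with rfl | hi1
    · -- the direct route `sr 1, 1, r b` repeats the colour `1`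
      refine .of_adj_adj_adj (powerGraph_adj_sr_one 1) (powerGraph_one_adj_r h01.symm)
        (powerGraph_adj_r_r_one hb1).symm ?_
      rw [powerGraphColoring_sr_one, one_def, powerGraphColoring_r_r_one, Sym2.eq_swap,
        powerGraphColoring_r_r_one]
      simp [h01.symm, hb0.symm, hb1.symm]
    · refine .of_adj_adj (powerGraph_adj_sr_one i) (powerGraph_one_adj_r hb0) ?_
      rwa [powerGraphColoring_sr_one, powerGraphColoring_one_r hb1]

lemma rainbowConnected_powerGraphColoring (hn : 3 ≤ n) (u v : DihedralGroup n) :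
    RainbowConnected (powerGraph (DihedralGroup n)) (powerGraphColoring n) u v := by
  cases u <;> cases v
  · exact rainbowConnected_r_r _ _
  · exact (rainbowConnected_sr_r hn _ _).symm
  · exact rainbowConnected_sr_r hn _ _
  · exact rainbowConnected_sr_sr _ _

end DihedralGroup

theorem rc_powerGraph_dihedral (n : ℕ) (hn : 3 ≤ n) :
    rainbowConnection (powerGraph (DihedralGroup n)) = n := by
  have : NeZero n := ⟨by omega⟩
  refine rainbowConnection_eq_of ?_ fun k ζ hζ => ?_
  · have h := exists_isRainbowColoring_of_rainbowConnected (powerGraphColoring n)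
      (rainbowConnected_powerGraphColoring hn)
    rwa [ZMod.card] at h
  · simpa using hζ.card_le_of_forall_adj_eq (f := sr) (fun _ _ => sr.inj)
      fun i _ h => (isMaximalInvolution_sr i).eq_one_of_powerGraph_adj h
end

section
/- If G is a finite noncyclic group with no maximal involutions, then the rainbow connection number of the power graph Γ_G equals 2 or 3. -/
/-!
Every element is adjacent to the identity `1`, so colouring the spokes `{x, 1}` with two colours
and every other edge with a third one leaves only pairs `u, v` of non-adjacent elements whose
spokes share a colour. These are joined by `u — w — 1 — v` as soon as `u` has a neighbour
`w ≠ 1` with the other spoke colour. Such a spoke colouring exists: an element of order `> 2`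
can be paired with its inverse, and an involution that is not maximal lies in a cyclic subgroup
generated by an element of order `> 2`, whose colour it avoids. Conversely, rainbow connection
`≤ 1` would make the power graph complete, and then an element of maximal order generates `G`.
-/

def spokeColor (b : Bool) : Fin 3 := if b then 1 else 0

theorem spokeColor_injective : Function.Injective spokeColor := by decide

theorem spokeColor_ne_two (b : Bool) : spokeColor b ≠ 2 := by revert b; decide

section RainbowColoring

open SimpleGraph

variable {V : Type*} {Γ : SimpleGraph V} {k : ℕ}

theorem IsRainbowColoring.adj_of_ne {ζ : Sym2 V → Fin k} (hζ : IsRainbowColoring Γ ζ)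
    (hk : k ≤ 1) {u v : V} (huv : u ≠ v) : Γ.Adj u v := by
  obtain ⟨p, -, hp⟩ := hζ u v
  have hlen : p.length ≤ k := by simpa using hp.length_le_card
  have hpos : p.length ≠ 0 := fun h => huv (Walk.eq_of_length_eq_zero h)
  exact p.adj_of_length_eq_one (by omega)

theorem rainbowConnection_le {ζ : Sym2 V → Fin k} (hζ : IsRainbowColoring Γ ζ) :
    rainbowConnection Γ ≤ k :=
  Nat.sInf_le ⟨ζ, hζ⟩

theorem two_le_rainbowConnection {ζ : Sym2 V → Fin k} (hζ : IsRainbowColoring Γ ζ)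
    {u v : V} (huv : u ≠ v) (hadj : ¬ Γ.Adj u v) : 2 ≤ rainbowConnection Γ := by
  have hne : {n : ℕ | ∃ ζ : Sym2 V → Fin n, IsRainbowColoring Γ ζ}.Nonempty := ⟨k, ζ, hζ⟩
  obtain ⟨ζ', hζ'⟩ : ∃ ζ' : Sym2 V → Fin (rainbowConnection Γ), IsRainbowColoring Γ ζ' :=
    Nat.sInf_mem hne
  by_contra! h
  exact hadj (hζ'.adj_of_ne (by omega) huv)

def hubColoring [DecidableEq V] (c : V) (σ : V → Bool) : Sym2 V → Fin 3 :=
  Sym2.lift ⟨fun a b => if a = c then spokeColor (σ b) else if b = c then spokeColor (σ a) else 2,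
    fun a b => by by_cases ha : a = c <;> by_cases hb : b = c <;> simp [ha, hb]⟩

section hubColoring

variable [DecidableEq V] {c : V} {σ : V → Bool}

@[simp]
theorem hubColoring_hub_left (v : V) : hubColoring c σ s(c, v) = spokeColor (σ v) := by
  simp [hubColoring]

@[simp]
theorem hubColoring_hub_right (v : V) : hubColoring c σ s(v, c) = spokeColor (σ v) := by
  rw [Sym2.eq_swap, hubColoring_hub_left]

@[simp]
theorem hubColoring_of_ne {u v : V} (hu : u ≠ c) (hv : v ≠ c) : hubColoring c σ s(u, v) = 2 := by
  simp [hubColoring, hu, hv]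

theorem isRainbowColoring_hubColoring (hc : ∀ v, v ≠ c → Γ.Adj v c)
    (hσ : ∀ u, u ≠ c → ∃ w, w ≠ c ∧ Γ.Adj u w ∧ σ w ≠ σ u) :
    IsRainbowColoring Γ (hubColoring c σ) := by
  intro u v
  rcases eq_or_ne u v with rfl | huv
  · exact ⟨.nil, .nil, by simp⟩
  by_cases hadj : Γ.Adj u v
  · exact ⟨hadj.toWalk, by simp [huv], by simp⟩
  have hu : u ≠ c := by rintro rfl; exact hadj (hc v (Ne.symm huv)).symm
  have hv : v ≠ c := by rintro rfl; exact hadj (hc u huv)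
  by_cases hσuv : σ u = σ v
  · obtain ⟨w, hw, huw, hσw⟩ := hσ u hu
    have hwv : w ≠ v := by rintro rfl; exact hadj huw
    refine ⟨.cons huw (.cons (hc w hw) (.cons (hc v hv).symm .nil)), ?_, ?_⟩
    · simp [huw.ne, hu, huv, hw, hwv, hv.symm]
    · simp [hu, hw, (spokeColor_ne_two _).symm, spokeColor_injective.ne (hσuv ▸ hσw)]
  · refine ⟨.cons (hc u hu) (.cons (hc v hv).symm .nil), ?_, ?_⟩
    · simp [hu, huv, hv.symm]
    · simp [spokeColor_injective.ne hσuv]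

end hubColoring

end RainbowColoring

theorem exists_bool_ne_of_involutive {α : Type*} {f : α → α} (hf : Function.Involutive f) :
    ∃ τ : α → Bool, ∀ x, f x ≠ x → τ (f x) ≠ τ x := by
  classical
  refine ⟨fun x => decide (WellOrderingRel x (f x)), fun x hx => ?_⟩
  show decide (WellOrderingRel (f x) (f (f x))) ≠ decide (WellOrderingRel x (f x))
  rw [hf x]
  rcases trichotomous_of WellOrderingRel x (f x) with h | h | h
  · simp [h, asymm h]
  · exact absurd h.symm hx
  · simp [h, asymm h]

section Group

variable {G : Type*} [Group G]

theorem powerGraph_adj_one {x : G} (hx : x ≠ 1) : (powerGraph G).Adj x 1 :=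
  ⟨hx, Or.inr (Subgroup.one_mem _)⟩

theorem powerGraph_adj_inv {x : G} (hx : x ≠ x⁻¹) : (powerGraph G).Adj x x⁻¹ :=
  ⟨hx, Or.inr (Subgroup.inv_mem _ (Subgroup.mem_zpowers x))⟩

theorem ne_inv_of_orderOf_ne_two {x : G} (h1 : x ≠ 1) (h2 : orderOf x ≠ 2) : x ≠ x⁻¹ := by
  intro h
  exact h2 (orderOf_eq_prime_iff.mpr ⟨by rw [pow_two, ← inv_eq_iff_mul_eq_one, ← h], h1⟩)

variable [Finite G]

theorem zpowers_eq_of_mem_of_orderOf_le {g x : G} (hx : x ∈ Subgroup.zpowers g)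
    (ho : orderOf g ≤ orderOf x) : Subgroup.zpowers g = Subgroup.zpowers x :=
  (Subgroup.eq_of_le_of_card_ge (Subgroup.zpowers_le.mpr hx)
    (by rwa [Nat.card_zpowers, Nat.card_zpowers])).symm

theorem isCyclic_of_powerGraph_adj (h : ∀ x y : G, x ≠ y → (powerGraph G).Adj x y) :
    IsCyclic G := by
  obtain ⟨g, hg⟩ := Finite.exists_max (orderOf : G → ℕ)
  refine ⟨g, fun x => (?_ : x ∈ Subgroup.zpowers g)⟩
  rcases eq_or_ne x g with rfl | hne
  · exact Subgroup.mem_zpowers x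
  rcases (h x g hne).2 with hx | hg'
  · exact hx
  · rw [← zpowers_eq_of_mem_of_orderOf_le hg' (hg x)]
    exact Subgroup.mem_zpowers x

theorem exists_two_lt_orderOf_of_not_isMaximalInvolution {x : G} (hx : orderOf x = 2)
    (hmax : ¬ IsMaximalInvolution x) : ∃ g : G, x ∈ Subgroup.zpowers g ∧ 2 < orderOf g := by
  simp only [IsMaximalInvolution, hx, true_and, not_forall] at hmax
  obtain ⟨g, hxg, hne⟩ := hmax
  have hdvd : 2 ∣ orderOf g := hx ▸ orderOf_dvd_of_mem_zpowers hxg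
  have hpos : 0 < orderOf g := orderOf_pos g
  have hne2 : orderOf g ≠ 2 := fun h => hne (zpowers_eq_of_mem_of_orderOf_le hxg (by omega))
  exact ⟨g, hxg, by omega⟩

theorem exists_powerGraph_spokeColoring (hno : ∀ x : G, ¬ IsMaximalInvolution x) :
    ∃ σ : G → Bool, ∀ x, x ≠ 1 → ∃ w, w ≠ 1 ∧ (powerGraph G).Adj x w ∧ σ w ≠ σ x := by
  classical
  obtain ⟨τ, hτ⟩ := exists_bool_ne_of_involutive (inv_involutive (G := G))
  have hpartner : ∀ x : G, ∃ g : G, orderOf x = 2 → x ∈ Subgroup.zpowers g ∧ 2 < orderOf g :=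
    fun x => by
      by_cases hx : orderOf x = 2
      · obtain ⟨g, hg⟩ := exists_two_lt_orderOf_of_not_isMaximalInvolution hx (hno x)
        exact ⟨g, fun _ => hg⟩
      · exact ⟨1, fun h => absurd h hx⟩
  choose F hF using hpartner
  refine ⟨fun x => if orderOf x = 2 then !τ (F x) else τ x, fun x hx1 => ?_⟩
  by_cases hx : orderOf x = 2
  · obtain ⟨hxF, hFo⟩ := hF x hx
    have hFx : x ≠ F x := fun h => by rw [← h] at hFo; omega
    have hF1 : F x ≠ 1 := by intro h; rw [h, orderOf_one] at hFo; omega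
    refine ⟨F x, hF1, ⟨hFx, Or.inl hxF⟩, ?_⟩
    simp [hx, hFo.ne']
  · have hxi := ne_inv_of_orderOf_ne_two hx1 hx
    refine ⟨x⁻¹, inv_ne_one.mpr hx1, powerGraph_adj_inv hxi, ?_⟩
    simpa [hx, orderOf_inv] using hτ x (Ne.symm hxi)

end Group

theorem rc_powerGraph_eq_two_or_three_of_noncyclic
    (G : Type*) [Group G] [Fintype G] (hnc : ¬ IsCyclic G)
    (hno : ∀ x : G, ¬ IsMaximalInvolution x) :
    rainbowConnection (powerGraph G) = 2 ∨ rainbowConnection (powerGraph G) = 3 := by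
  classical
  obtain ⟨σ, hσ⟩ := exists_powerGraph_spokeColoring hno
  have hζ := isRainbowColoring_hubColoring (fun _ => powerGraph_adj_one) hσ
  obtain ⟨u, v, huv, hadj⟩ : ∃ u v : G, u ≠ v ∧ ¬ (powerGraph G).Adj u v := by
    by_contra! h
    exact hnc (isCyclic_of_powerGraph_adj h)
  have hle := rainbowConnection_le hζ
  have hge := two_le_rainbowConnection hζ huv hadj
  omega
end
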